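/- Let $A$ be a dendriform algebra with an action of a finite group $G$. The restriction maps $F_n : C^n_G(A, A) \to S^n_G(\Phi_A, \Phi_A)$, $\alpha \mapsto \{\alpha|_{\mathbb{K}[C_n] \otimes (A^H)^{\otimes n}}\}_{H \leq G}$, form a cochain isomorphism, inducing isomorphisms $H^n_G(A, A) \cong H_n(S^{\sharp}_G(\Phi_A, \Phi_A))$ for all $n \geq 1$. -/
import Mathlib


section Defs

variable {K A G : Type*} [Field K] [AddCommGroup A] [Module K A] [Group G]

/-- `2`-cochain encoding of a pair of binary operations. -/
def toC2 (p s : A →ₗ[K] A →ₗ[K] A) : Fin 2 → (Fin 2 → A) → A :=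
  fun r a => if r = 0 then p (a 0) (a 1) else s (a 0) (a 1)

/-- The coboundary operator of the dendriform cochain complex. -/
def dcob {B : Type*} [AddCommGroup B] {n : ℕ}
    (π : Fin 2 → (Fin 2 → B) → B)
    (f : Fin n → (Fin n → B) → B) :
    Fin (n + 1) → (Fin (n + 1) → B) → B := fun r a =>
  (if hr : (r : ℕ) = 0 then
      π 0 ![a 0, ∑ k : Fin n, f k (fun j => a j.succ)]
    else
      π 1 ![a 0, f ⟨(r : ℕ) - 1, by have := r.isLt; omega⟩ (fun j => a j.succ)])
  + (∑ i : Fin n, ((-1 : ℤ) ^ ((i : ℕ) + 1)) •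
      f (if _h1 : (r : ℕ) < (i : ℕ) then ⟨(r : ℕ), by have := i.isLt; omega⟩
         else if _h2 : (r : ℕ) ≤ (i : ℕ) + 1 then ⟨(i : ℕ), i.isLt⟩
         else ⟨(r : ℕ) - 1, by have := r.isLt; omega⟩)
        (fun j =>
          if _h3 : (j : ℕ) < (i : ℕ) then a j.castSucc
          else if _h4 : (j : ℕ) = (i : ℕ) then
            (if (r : ℕ) = (i : ℕ) then π 0 ![a i.castSucc, a i.succ]
             else if (r : ℕ) = (i : ℕ) + 1 then π 1 ![a i.castSucc, a i.succ]
             else π 0 ![a i.castSucc, a i.succ] + π 1 ![a i.castSucc, a i.succ])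
          else a j.succ))
  + ((-1 : ℤ) ^ (n + 1)) •
      (if hrn : (r : ℕ) = n then
        π 1 ![∑ k : Fin n, f k (fun j => a j.castSucc), a (Fin.last n)]
      else
        π 0 ![f ⟨(r : ℕ), by have := r.isLt; omega⟩ (fun j => a j.castSucc),
              a (Fin.last n)])

/-- Multilinearity of a dendriform cochain. -/
def IsMultilin (K : Type*) {B : Type*} [Field K] [AddCommGroup B] [Module K B]
    {n : ℕ} (f : Fin n → (Fin n → B) → B) : Prop :=
  (∀ (r : Fin n) (a : Fin n → B) (i : Fin n) (x y : B),
    f r (Function.update a i (x + y)) =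
      f r (Function.update a i x) + f r (Function.update a i y)) ∧
  (∀ (r : Fin n) (a : Fin n → B) (i : Fin n) (k : K) (x : B),
    f r (Function.update a i (k • x)) = k • f r (Function.update a i x))

/-- `G`-equivariance of a dendriform cochain. -/
def IsEquivCochain (ρ : G →* Module.End K A) {n : ℕ}
    (f : Fin n → (Fin n → A) → A) : Prop :=
  ∀ (g : G) (r : Fin n) (a : Fin n → A),
    f r (fun i => ρ g (a i)) = ρ g (f r a)

/-- The `H`-fixed point submodule `A^H` of a linear `G`-action. -/
def fixedSubmodule (ρ : G →* Module.End K A) (H : Subgroup G) : Submodule K A where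
  carrier := {a : A | ∀ h ∈ H, ρ h a = a}
  add_mem' := by
    intro a b ha hb h hh
    simp [map_add, ha h hh, hb h hh]
  zero_mem' := by intro h hh; simp
  smul_mem' := by
    intro c a ha h hh
    simp [map_smul, ha h hh]

/-- The map `ψ_g : A^K → A^H` induced by a subconjugacy relation `g⁻¹Hg ⊆ K`. -/
def psiMap (ρ : G →* Module.End K A) (g : G) (H K' : Subgroup G)
    (hsub : ∀ h ∈ H, g⁻¹ * h * g ∈ K') (x : fixedSubmodule ρ K') :
    fixedSubmodule ρ H :=
  ⟨ρ g (x : A), by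
    intro h hh
    have hx : ρ (g⁻¹ * h * g) (x : A) = (x : A) := x.2 _ (hsub h hh)
    have e : ρ h * ρ g = ρ g * ρ (g⁻¹ * h * g) := by
      rw [← map_mul, ← map_mul]; congr 1; group
    calc ρ h (ρ g (x : A)) = (ρ h * ρ g) (x : A) := rfl
      _ = (ρ g * ρ (g⁻¹ * h * g)) (x : A) := by rw [e]
      _ = ρ g (ρ (g⁻¹ * h * g) (x : A)) := rfl
      _ = ρ g (x : A) := by rw [hx]⟩

/-- Restriction of a `G`-equivariant cochain on `A` to the fixed points `A^H`. -/
def restrCochain (ρ : G →* Module.End K A) {n : ℕ}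
    (f : Fin n → (Fin n → A) → A) (hf : IsEquivCochain ρ f) (H : Subgroup G) :
    Fin n → (Fin n → fixedSubmodule ρ H) → fixedSubmodule ρ H := fun r x =>
  ⟨f r (fun i => (x i : A)), by
    intro h hh
    rw [← hf h r (fun i => (x i : A))]
    congr 1
    funext i
    exact (x i).2 h hh⟩

/-- Invariance of a family of cochains `{c_H}_{H ≤ G}` with respect to all the
maps `ψ_g` coming from subconjugacy relations. -/
def IsInvariantFamily (ρ : G →* Module.End K A) {n : ℕ}
    (c : ∀ H : Subgroup G,
      Fin n → (Fin n → fixedSubmodule ρ H) → fixedSubmodule ρ H) : Prop :=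
  ∀ (H K' : Subgroup G) (g : G) (hsub : ∀ h ∈ H, g⁻¹ * h * g ∈ K')
    (r : Fin n) (x : Fin n → fixedSubmodule ρ K'),
    c H r (fun i => psiMap ρ g H K' hsub (x i)) =
      psiMap ρ g H K' hsub (c K' r x)

/-- Equivariant dendriform `(n+1)`-cocycles of `A`. -/
def ZC (pr sc : A →ₗ[K] A →ₗ[K] A) (ρ : G →* Module.End K A) (n : ℕ) :=
  {f : Fin (n + 1) → (Fin (n + 1) → A) → A //
    IsMultilin K f ∧ IsEquivCochain ρ f ∧
    ∀ (r : Fin (n + 2)) (a : Fin (n + 2) → A), dcob (toC2 pr sc) f r a = 0}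

/-- Cohomologous equivariant cocycles: they differ by the coboundary of an
equivariant cochain. -/
def relC (pr sc : A →ₗ[K] A →ₗ[K] A) (ρ : G →* Module.End K A) (n : ℕ)
    (f f' : ZC pr sc ρ n) : Prop :=
  ∃ h : Fin n → (Fin n → A) → A,
    IsMultilin K h ∧ IsEquivCochain ρ h ∧
    ∀ (r : Fin (n + 1)) (a : Fin (n + 1) → A),
      f.1 r a = f'.1 r a + dcob (toC2 pr sc) h r a

/-- Invariant families of dendriform `(n+1)`-cocycles of the fixed point
subalgebras `A^H`. -/
def ZS (pr sc : A →ₗ[K] A →ₗ[K] A) (ρ : G →* Module.End K A)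
    (heq : IsEquivCochain ρ (toC2 pr sc)) (n : ℕ) :=
  {c : ∀ H : Subgroup G,
      Fin (n + 1) → (Fin (n + 1) → fixedSubmodule ρ H) → fixedSubmodule ρ H //
    (∀ H, IsMultilin K (c H)) ∧ IsInvariantFamily ρ c ∧
    ∀ (H : Subgroup G) (r : Fin (n + 2)) (x : Fin (n + 2) → fixedSubmodule ρ H),
      dcob (restrCochain ρ (toC2 pr sc) heq H) (c H) r x = 0}

/-- Cohomologous invariant families of cocycles. -/
def relS (pr sc : A →ₗ[K] A →ₗ[K] A) (ρ : G →* Module.End K A)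
    (heq : IsEquivCochain ρ (toC2 pr sc)) (n : ℕ)
    (c c' : ZS pr sc ρ heq n) : Prop :=
  ∃ h : ∀ H : Subgroup G,
      Fin n → (Fin n → fixedSubmodule ρ H) → fixedSubmodule ρ H,
    (∀ H, IsMultilin K (h H)) ∧ IsInvariantFamily ρ h ∧
    ∀ (H : Subgroup G) (r : Fin (n + 1)) (x : Fin (n + 1) → fixedSubmodule ρ H),
      c.1 H r x = c'.1 H r x + dcob (restrCochain ρ (toC2 pr sc) heq H) (h H) r x

end Defs

section Aux

variable {K A G : Type*} [Field K] [AddCommGroup A] [Module K A] [Group G]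
variable (ρ : G →* Module.End K A)

lemma memBot (a : A) : a ∈ fixedSubmodule ρ (⊥ : Subgroup G) := by
  intro h hh
  rw [Subgroup.mem_bot] at hh
  subst hh
  simp [map_one]

lemma coe_update {H : Subgroup G} {n : ℕ} (x : Fin n → fixedSubmodule ρ H)
    (i : Fin n) (w : fixedSubmodule ρ H) :
    (fun j => ((Function.update x i w j : fixedSubmodule ρ H) : A)) =
      Function.update (fun j => ((x j : fixedSubmodule ρ H) : A)) i (w : A) := by
  funext j
  by_cases h : j = i
  · subst h; simp
  · simp [Function.update_of_ne h]

lemma restr_multilin {n : ℕ} (f : Fin n → (Fin n → A) → A)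
    (hf : IsMultilin K f) (hef : IsEquivCochain ρ f) (H : Subgroup G) :
    IsMultilin K (restrCochain ρ f hef H) := by
  constructor
  · intro r x i u v
    apply Subtype.ext
    show f r _ = (f r _ + f r _ : A)
    rw [coe_update, coe_update, coe_update]
    exact hf.1 r _ i u v
  · intro r x i k u
    apply Subtype.ext
    show f r _ = (k • f r _ : A)
    rw [coe_update, coe_update]
    exact hf.2 r _ i k u

lemma restr_inv {n : ℕ} (f : Fin n → (Fin n → A) → A)
    (hef : IsEquivCochain ρ f) :
    IsInvariantFamily ρ (fun H => restrCochain ρ f hef H) := by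
  intro H K' g hsub r x
  apply Subtype.ext
  show f r (fun i => ρ g ((x i : A))) = ρ g (f r _)
  exact hef g r _

/-- Extension of an invariant family to a cochain on `A`, via `H = ⊥`. -/
def extCochain {n : ℕ}
    (c : ∀ H : Subgroup G,
      Fin n → (Fin n → fixedSubmodule ρ H) → fixedSubmodule ρ H) :
    Fin n → (Fin n → A) → A := fun r a =>
  ((c ⊥ r (fun i => ⟨a i, memBot ρ (a i)⟩) : fixedSubmodule ρ (⊥ : Subgroup G)) : A)

lemma ext_multilin {n : ℕ}
    (c : ∀ H : Subgroup G,
      Fin n → (Fin n → fixedSubmodule ρ H) → fixedSubmodule ρ H)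
    (hc : ∀ H, IsMultilin K (c H)) : IsMultilin K (extCochain ρ c) := by
  constructor
  · intro r a i x y
    unfold extCochain
    have h1 : (fun j => (⟨Function.update a i (x + y) j, memBot ρ _⟩ :
        fixedSubmodule ρ (⊥ : Subgroup G))) =
        Function.update (fun j => (⟨a j, memBot ρ (a j)⟩ :
          fixedSubmodule ρ (⊥ : Subgroup G))) i ⟨x + y, memBot ρ _⟩ := by
      funext j
      by_cases h : j = i
      · subst h; simp
      · simp [Function.update_of_ne h]
    have h2 : (fun j => (⟨Function.update a i x j, memBot ρ _⟩ :
        fixedSubmodule ρ (⊥ : Subgroup G))) =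
        Function.update (fun j => (⟨a j, memBot ρ (a j)⟩ :
          fixedSubmodule ρ (⊥ : Subgroup G))) i ⟨x, memBot ρ _⟩ := by
      funext j
      by_cases h : j = i
      · subst h; simp
      · simp [Function.update_of_ne h]
    have h3 : (fun j => (⟨Function.update a i y j, memBot ρ _⟩ :
        fixedSubmodule ρ (⊥ : Subgroup G))) =
        Function.update (fun j => (⟨a j, memBot ρ (a j)⟩ :
          fixedSubmodule ρ (⊥ : Subgroup G))) i ⟨y, memBot ρ _⟩ := by
      funext j
      by_cases h : j = i
      · subst h; simp
      · simp [Function.update_of_ne h]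
    rw [h1, h2, h3]
    have hupd : (⟨x + y, memBot ρ _⟩ : fixedSubmodule ρ (⊥ : Subgroup G)) =
        ⟨x, memBot ρ _⟩ + ⟨y, memBot ρ _⟩ := rfl
    rw [hupd, (hc ⊥).1 r _ i ⟨x, memBot ρ _⟩ ⟨y, memBot ρ _⟩]
    rfl
  · intro r a i k x
    unfold extCochain
    have h2 : (fun j => (⟨Function.update a i (k • x) j, memBot ρ _⟩ :
        fixedSubmodule ρ (⊥ : Subgroup G))) =
        Function.update (fun j => (⟨a j, memBot ρ (a j)⟩ :
          fixedSubmodule ρ (⊥ : Subgroup G))) i (k • ⟨x, memBot ρ _⟩) := by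
      funext j
      by_cases h : j = i
      · subst h; simp
      · simp [Function.update_of_ne h]
    have h3 : (fun j => (⟨Function.update a i x j, memBot ρ _⟩ :
        fixedSubmodule ρ (⊥ : Subgroup G))) =
        Function.update (fun j => (⟨a j, memBot ρ (a j)⟩ :
          fixedSubmodule ρ (⊥ : Subgroup G))) i ⟨x, memBot ρ _⟩ := by
      funext j
      by_cases h : j = i
      · subst h; simp
      · simp [Function.update_of_ne h]
    rw [h2, h3, (hc ⊥).2 r _ i k ⟨x, memBot ρ _⟩]
    rfl

lemma ext_equiv {n : ℕ}
    (c : ∀ H : Subgroup G,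
      Fin n → (Fin n → fixedSubmodule ρ H) → fixedSubmodule ρ H)
    (hinv : IsInvariantFamily ρ c) : IsEquivCochain ρ (extCochain ρ c) := by
  intro g r a
  unfold extCochain
  have hsub : ∀ h ∈ (⊥ : Subgroup G), g⁻¹ * h * g ∈ (⊥ : Subgroup G) := by
    intro h hh
    rw [Subgroup.mem_bot] at hh ⊢
    subst hh; group
  have key := hinv ⊥ ⊥ g hsub r (fun i => ⟨a i, memBot ρ (a i)⟩)
  have harg : (fun i => psiMap ρ g ⊥ ⊥ hsub (⟨a i, memBot ρ (a i)⟩ :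
      fixedSubmodule ρ (⊥ : Subgroup G))) =
      (fun i => (⟨ρ g (a i), memBot ρ _⟩ : fixedSubmodule ρ (⊥ : Subgroup G))) := rfl
  rw [harg] at key
  exact congrArg Subtype.val key

lemma restr_ext {n : ℕ}
    (c : ∀ H : Subgroup G,
      Fin n → (Fin n → fixedSubmodule ρ H) → fixedSubmodule ρ H)
    (hinv : IsInvariantFamily ρ c)
    (hef : IsEquivCochain ρ (extCochain ρ c)) (H : Subgroup G) :
    restrCochain ρ (extCochain ρ c) hef H = c H := by
  funext r x
  apply Subtype.ext
  show extCochain ρ c r (fun i => (x i : A)) = ((c H r x : fixedSubmodule ρ H) : A)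
  unfold extCochain
  have hsub : ∀ h ∈ (⊥ : Subgroup G), (1 : G)⁻¹ * h * 1 ∈ H := by
    intro h hh
    rw [Subgroup.mem_bot] at hh
    subst hh; simpa using H.one_mem
  have key := hinv ⊥ H 1 hsub r x
  have harg : (fun i => psiMap ρ 1 ⊥ H hsub (x i)) =
      (fun i => (⟨(x i : A), memBot ρ _⟩ : fixedSubmodule ρ (⊥ : Subgroup G))) := by
    funext i
    apply Subtype.ext
    show ρ 1 ((x i : A)) = (x i : A)
    simp [map_one]
  rw [harg] at key
  have := congrArg Subtype.val key
  simpa [psiMap, map_one] using this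

end Aux

section Aux2

variable {K A G : Type*} [Field K] [AddCommGroup A] [Module K A] [Group G]
variable (ρ : G →* Module.End K A)

lemma coe_vec2 {H : Subgroup G} (u v : fixedSubmodule ρ H) :
    (fun i => ((![u, v] : Fin 2 → fixedSubmodule ρ H) i : A)) =
      ![(u : A), (v : A)] := by
  funext i
  fin_cases i <;> rfl

lemma restr_apply2 {H : Subgroup G} (π : Fin 2 → (Fin 2 → A) → A)
    (hπ : IsEquivCochain ρ π) (r : Fin 2) (u v : fixedSubmodule ρ H) :
    ((restrCochain ρ π hπ H r ![u, v] : fixedSubmodule ρ H) : A) =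
      π r ![(u : A), (v : A)] := by
  show π r _ = _
  rw [coe_vec2]

lemma coe_dcob {n : ℕ} {H : Subgroup G} (π : Fin 2 → (Fin 2 → A) → A)
    (hπ : IsEquivCochain ρ π) (f : Fin n → (Fin n → A) → A)
    (hf : IsEquivCochain ρ f) (r : Fin (n + 1))
    (x : Fin (n + 1) → fixedSubmodule ρ H) :
    ((dcob (restrCochain ρ π hπ H) (restrCochain ρ f hf H) r x :
        fixedSubmodule ρ H) : A) =
      dcob π f r (fun i => ((x i : A))) := by
  unfold dcob
  push_cast [apply_dite (Subtype.val : fixedSubmodule ρ H → A),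
    apply_ite (Subtype.val : fixedSubmodule ρ H → A)]
  simp only [restrCochain, AddSubmonoidClass.coe_finset_sum, AddSubgroupClass.coe_zsmul,
    Submodule.coe_add, apply_dite (Subtype.val : fixedSubmodule ρ H → A),
    apply_ite (Subtype.val : fixedSubmodule ρ H → A), coe_vec2 ρ]

end Aux2

section Aux3

variable {K A G : Type*} [Field K] [AddCommGroup A] [Module K A] [Group G]
variable (pr sc : A →ₗ[K] A →ₗ[K] A) (ρ : G →* Module.End K A)
variable (heq : IsEquivCochain ρ (toC2 pr sc)) (n : ℕ)

/-- Restriction map on cocycles. -/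
def phiZ (f : ZC pr sc ρ n) : ZS pr sc ρ heq n :=
  ⟨fun H => restrCochain ρ f.1 f.2.2.1 H,
   fun H => restr_multilin ρ f.1 f.2.1 f.2.2.1 H,
   restr_inv ρ f.1 f.2.2.1, by
    intro H r x
    apply Subtype.ext
    rw [ZeroMemClass.coe_zero, coe_dcob]
    exact f.2.2.2 r _⟩

/-- Extension map on cocycles. -/
def psiZ (c : ZS pr sc ρ heq n) : ZC pr sc ρ n :=
  ⟨extCochain ρ c.1, ext_multilin ρ c.1 c.2.1, ext_equiv ρ c.1 c.2.2.1, by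
    intro r a
    have hef := ext_equiv ρ c.1 c.2.2.1
    have h1 := coe_dcob ρ (toC2 pr sc) heq (extCochain ρ c.1) hef r
      (fun i => ⟨a i, memBot ρ (a i)⟩)
    rw [restr_ext ρ c.1 c.2.2.1 hef ⊥] at h1
    rw [c.2.2.2 ⊥ r _] at h1
    have h2 := h1.symm
    simp only [ZeroMemClass.coe_zero] at h2
    exact h2⟩

lemma phi_psi (c : ZS pr sc ρ heq n) : phiZ pr sc ρ heq n (psiZ pr sc ρ heq n c) = c :=
  Subtype.ext (funext fun H => restr_ext ρ c.1 c.2.2.1 (psiZ pr sc ρ heq n c).2.2.1 H)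

lemma psi_phi (f : ZC pr sc ρ n) : psiZ pr sc ρ heq n (phiZ pr sc ρ heq n f) = f :=
  Subtype.ext rfl

lemma sound1 {f f' : ZC pr sc ρ n} (hrel : relC pr sc ρ n f f') :
    relS pr sc ρ heq n (phiZ pr sc ρ heq n f) (phiZ pr sc ρ heq n f') := by
  obtain ⟨h, hm, he, hrel⟩ := hrel
  refine ⟨fun H => restrCochain ρ h he H, fun H => restr_multilin ρ h hm he H,
    restr_inv ρ h he, ?_⟩
  intro H r x
  apply Subtype.ext
  show f.1 r (fun i => ((x i : A))) = _
  rw [Submodule.coe_add, coe_dcob]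
  exact hrel r _

lemma sound2 {c c' : ZS pr sc ρ heq n} (hrel : relS pr sc ρ heq n c c') :
    relC pr sc ρ n (psiZ pr sc ρ heq n c) (psiZ pr sc ρ heq n c') := by
  obtain ⟨h, hm, hinv, hrel⟩ := hrel
  have heh := ext_equiv ρ h hinv
  refine ⟨extCochain ρ h, ext_multilin ρ h hm, heh, ?_⟩
  intro r a
  have h1 := hrel ⊥ r (fun i => ⟨a i, memBot ρ (a i)⟩)
  have h2 := congrArg Subtype.val h1
  rw [Submodule.coe_add] at h2
  rw [show h ⊥ = restrCochain ρ (extCochain ρ h) heh ⊥ from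
    (restr_ext ρ h hinv heh ⊥).symm, coe_dcob] at h2
  exact h2

end Aux3


/-- For a dendriform algebra `A` with an action of a finite group `G`, the
restriction maps `F_n : C^n_G(A,A) → S^n_G(Φ_A, Φ_A)` form an isomorphism of
cochain complexes, and induce isomorphisms
`H^n_G(A,A) ≅ H_n(S^♯_G(Φ_A, Φ_A))` for all `n ≥ 1`. -/
theorem equivariant_cohomology_iso {K A G : Type*} [Field K]
    [AddCommGroup A] [Module K A] [Group G] [Finite G]
    (pr sc : A →ₗ[K] A →ₗ[K] A)
    (h1 : ∀ a b c : A, pr (pr a b) c = pr a (pr b c + sc b c))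
    (h2 : ∀ a b c : A, pr (sc a b) c = sc a (pr b c))
    (h3 : ∀ a b c : A, sc (pr a b + sc a b) c = sc a (sc b c))
    (ρ : G →* Module.End K A)
    (hpr : ∀ (g : G) (a b : A), ρ g (pr a b) = pr (ρ g a) (ρ g b))
    (hsc : ∀ (g : G) (a b : A), ρ g (sc a b) = sc (ρ g a) (ρ g b))
    (heq : IsEquivCochain ρ (toC2 pr sc)) :
    -- `F` maps equivariant cochains to invariant families of cochains
    (∀ (n : ℕ) (f : Fin n → (Fin n → A) → A)
        (_ : IsMultilin K f) (hef : IsEquivCochain ρ f),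
      (∀ H : Subgroup G, IsMultilin K (restrCochain ρ f hef H)) ∧
      IsInvariantFamily ρ (fun H => restrCochain ρ f hef H)) ∧
    -- `F` is injective
    (∀ (n : ℕ) (f f' : Fin n → (Fin n → A) → A)
        (_ : IsMultilin K f) (hef : IsEquivCochain ρ f)
        (_ : IsMultilin K f') (hef' : IsEquivCochain ρ f'),
      (∀ H : Subgroup G, restrCochain ρ f hef H = restrCochain ρ f' hef' H) →
      f = f') ∧
    -- `F` is surjective onto invariant families
    (∀ (n : ℕ)
        (c : ∀ H : Subgroup G,
          Fin n → (Fin n → fixedSubmodule ρ H) → fixedSubmodule ρ H),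
      (∀ H, IsMultilin K (c H)) → IsInvariantFamily ρ c →
      ∃ (f : Fin n → (Fin n → A) → A) (_ : IsMultilin K f)
        (hef : IsEquivCochain ρ f),
        ∀ H : Subgroup G, restrCochain ρ f hef H = c H) ∧
    -- `F` is a cochain map: it commutes with the dendriform coboundaries
    (∀ (n : ℕ) (f : Fin n → (Fin n → A) → A) (hef : IsEquivCochain ρ f)
        (H : Subgroup G) (r : Fin (n + 1))
        (x : Fin (n + 1) → fixedSubmodule ρ H),
      (dcob (restrCochain ρ (toC2 pr sc) heq H) (restrCochain ρ f hef H) r x).1 =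
        dcob (toC2 pr sc) f r (fun i => ((x i : A)))) ∧
    -- `F` induces an isomorphism on cohomology in every degree `n + 1 ≥ 1`
    (∀ n : ℕ,
      ∃ e : Quot (relC pr sc ρ n) ≃ Quot (relS pr sc ρ heq n),
        ∀ (f : ZC pr sc ρ n) (c : ZS pr sc ρ heq n),
          (∀ (H : Subgroup G) (r : Fin (n + 1))
              (x : Fin (n + 1) → fixedSubmodule ρ H),
            ((c.1 H r x : A)) = f.1 r (fun i => ((x i : A)))) →
          e (Quot.mk _ f) = Quot.mk _ c) := by
  refine ⟨?_, ?_, ?_, ?_, ?_⟩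
  · intro n f hm hef
    exact ⟨restr_multilin ρ f hm hef, restr_inv ρ f hef⟩
  · intro n f f' hm hef hm' hef' hres
    funext r a
    have h1 := congrFun (congrFun (hres ⊥) r) (fun i => ⟨a i, memBot ρ (a i)⟩)
    exact congrArg Subtype.val h1
  · intro n c hm hinv
    exact ⟨extCochain ρ c, ext_multilin ρ c hm, ext_equiv ρ c hinv,
      restr_ext ρ c hinv (ext_equiv ρ c hinv)⟩
  · intro n f hef H r x
    exact coe_dcob ρ (toC2 pr sc) heq f hef r x
  · intro n
    refine ⟨{
      toFun := Quot.map (phiZ pr sc ρ heq n) (fun _ _ => sound1 pr sc ρ heq n)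
      invFun := Quot.map (psiZ pr sc ρ heq n) (fun _ _ => sound2 pr sc ρ heq n)
      left_inv := by
        intro q
        induction q using Quot.ind with
        | _ f => exact congrArg (Quot.mk _) (psi_phi pr sc ρ heq n f)
      right_inv := by
        intro q
        induction q using Quot.ind with
        | _ c => exact congrArg (Quot.mk _) (phi_psi pr sc ρ heq n c) }, ?_⟩
    intro f c hcomp
    have hc : phiZ pr sc ρ heq n f = c := by
      apply Subtype.ext
      funext H r x
      apply Subtype.ext
      exact (hcomp H r x).symm
    exact congrArg (Quot.mk _) hc
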